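/- arXiv:math/0008057 — 2 statements merged into one kernel-verified Lean document; each statement's English description precedes it below -/
import Mathlib

section
/- Let a₀, a₁, a₂, … be complex numbers and define c₀ = 1 and c_k = Σ_{j=0}^{k−1} c_j a_{k−1−j} for k ≥ 1. Then for every r ≥ 1: conj(M_r) = B̃_r* · diag(I_r − T̃_r* T̃_r, 1) · B̃_r, where conj(M_r) is the entrywise complex conjugate of M_r and diag(A, 1) denotes the (r+1)×(r+1) block-diagonal matrix with the r×r block A in the top-left and scalar entry 1 in the bottom-right corner. -/
open scoped Matrix ComplexConjugate

/-- The number of negative eigenvalues (with multiplicity) of a Hermitian complex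
matrix; junk value `0` if the matrix is not Hermitian. -/
noncomputable def negEig {n : Type*} [Fintype n] [DecidableEq n]
    (A : Matrix n n ℂ) : ℕ :=
  if h : A.IsHermitian then Nat.card {i // h.eigenvalues i < 0} else 0

/-- The number of positive eigenvalues (with multiplicity) of a Hermitian complex
matrix; junk value `0` if the matrix is not Hermitian. -/
noncomputable def posEig {n : Type*} [Fintype n] [DecidableEq n]
    (A : Matrix n n ℂ) : ℕ :=
  if h : A.IsHermitian then Nat.card {i // 0 < h.eigenvalues i} else 0

/-- The Schur kernel `K_S(w,z) = (1 - S(z) conj(S(w)))/(1 - z conj(w))`. -/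
noncomputable def schurKer (S : ℂ → ℂ) (w z : ℂ) : ℂ :=
  (1 - S z * conj (S w)) / (1 - z * conj w)

/-- A Hermitian kernel `K` has exactly `κ` negative squares on `Ω`. -/
def HasNegSquares (Ω : Set ℂ) (K : ℂ → ℂ → ℂ) (κ : ℕ) : Prop :=
  (∀ (m : ℕ) (z : Fin m → ℂ), (∀ i, z i ∈ Ω) →
      negEig (Matrix.of fun i j => K (z j) (z i)) ≤ κ) ∧
  (∃ (m : ℕ) (z : Fin m → ℂ), (∀ i, z i ∈ Ω) ∧
      negEig (Matrix.of fun i j => K (z j) (z i)) = κ)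

/-- The `r×r` lower triangular Toeplitz matrix built from `a₀, a₁, …`. -/
def Tmat (a : ℕ → ℂ) (r : ℕ) : Matrix (Fin r) (Fin r) ℂ :=
  Matrix.of fun i j => if (j : ℕ) ≤ i then a ((i : ℕ) - j) else 0

/-- The `r×r` lower triangular Toeplitz matrix built from `conj a₀, conj a₁, …`. -/
def Ttil (a : ℕ → ℂ) (r : ℕ) : Matrix (Fin r) (Fin r) ℂ :=
  Matrix.of fun i j => if (j : ℕ) ≤ i then conj (a ((i : ℕ) - j)) else 0

/-- The `r×r` Hankel matrix with entries `a_{i+j+1}`. -/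
def Qmat (a : ℕ → ℂ) (r : ℕ) : Matrix (Fin r) (Fin r) ℂ :=
  Matrix.of fun i j => a ((i : ℕ) + j + 1)

/-- The `m×m` lower triangular Toeplitz matrix built from `c₀, c₁, …`. -/
def Bmat (c : ℕ → ℂ) (m : ℕ) : Matrix (Fin m) (Fin m) ℂ :=
  Matrix.of fun i j => if (j : ℕ) ≤ i then c ((i : ℕ) - j) else 0

/-- The `m×m` lower triangular Toeplitz matrix built from `conj c₀, conj c₁, …`. -/
def Btil (c : ℕ → ℂ) (m : ℕ) : Matrix (Fin m) (Fin m) ℂ :=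
  Matrix.of fun i j => if (j : ℕ) ≤ i then conj (c ((i : ℕ) - j)) else 0

/-- The `m×m` Hermitian Toeplitz matrix built from `c₀, c₁, …`
(`M_r` of the paper has size `r+1`, i.e. it is `Mmat c (r+1)`). -/
def Mmat (c : ℕ → ℂ) (m : ℕ) : Matrix (Fin m) (Fin m) ℂ :=
  Matrix.of fun i j =>
    if (j : ℕ) ≤ i then c ((i : ℕ) - j) else conj (c ((j : ℕ) - i))

/-- The `m×m` flip matrix, with ones on the antidiagonal. -/
def Jmat (m : ℕ) : Matrix (Fin m) (Fin m) ℂ :=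
  Matrix.of fun i j => if (i : ℕ) + j + 1 = m then 1 else 0

/-- Identification of `Fin m` with `Fin p ⊕ Fin q` when `m = p + q`. -/
def splitAt {p q m : ℕ} (h : m = p + q) : Fin m → Fin p ⊕ Fin q :=
  fun i =>
    if h' : (i : ℕ) < p then Sum.inl ⟨i, h'⟩
    else Sum.inr ⟨(i : ℕ) - p, by have := i.isLt; omega⟩

/-- The `m×m` block diagonal matrix `diag(A, D)` with `A` of size `p` and `D` of
size `q`, where `m = p + q`. -/
def dblock {p q m : ℕ} (h : m = p + q)
    (A : Matrix (Fin p) (Fin p) ℂ) (D : Matrix (Fin q) (Fin q) ℂ) :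
    Matrix (Fin m) (Fin m) ℂ :=
  (Matrix.fromBlocks A 0 0 D).submatrix (splitAt h) (splitAt h)

/-- The sequence `c` belongs to the class `P_ν`: `ν(M_r) = ν` for all
sufficiently large `r`. -/
def memP (c : ℕ → ℂ) (ν : ℕ) : Prop :=
  ∃ N, ∀ r ≥ N, negEig (Mmat c (r + 1)) = ν

/-- The sequence `c` belongs to the class `P_{ν,π}`: `ν(M_r) = ν` and
`π(M_r) = π` for all sufficiently large `r`. -/
def memPP (c : ℕ → ℂ) (ν π : ℕ) : Prop :=
  ∃ N, ∀ r ≥ N, negEig (Mmat c (r + 1)) = ν ∧ posEig (Mmat c (r + 1)) = π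

/-! The lower-triangular Toeplitz matrix of `f` is the matrix of multiplication by `f` on
`R⟦X⟧ / (X ^ m)`, so these matrices are the image of a ring homomorphism out of `R⟦X⟧`.
The recurrence for `c` says `(1 - X a(X)) c(X) = 1`; conjugating, `B̃_r` has inverse `1 - N`,
where `N` is the Toeplitz matrix of `X ā(X)`. Since `conj M_r = B̃_r + B̃_r* - 1`, the claim
is equivalent to `1 - N* N = diag(1 - T̃_r* T̃_r, 1)`, and this holds because `N` is `T̃_r`
shifted one step down, with a zero first row and a zero last column. -/

open PowerSeries

theorem Finset.Nat.sum_antidiagonal_sub_eq_sum_Icc {M : Type*} [AddCommMonoid M]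
    (F : ℕ → ℕ → M) {i j : ℕ} (hji : j ≤ i) :
    ∑ p ∈ antidiagonal (i - j), F p.1 p.2 = ∑ k ∈ Finset.Icc j i, F (i - k) (k - j) := by
  refine Finset.sum_nbij' (fun p => j + p.2) (fun k => (i - k, k - j)) ?_ ?_ ?_ ?_ ?_ <;>
    simp only [Finset.mem_Icc, HasAntidiagonal.mem_antidiagonal, Prod.forall, Prod.mk.injEq]
  · intros; omega
  · intros; omega
  · intros; omega
  · intros; omega
  · intro p q hpq
    rw [show i - (j + q) = p by omega, Nat.add_sub_cancel_left]

section LowerToeplitz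

variable {R : Type*} [Semiring R] (m : ℕ)

noncomputable def lowerToeplitz : R⟦X⟧ →+* Matrix (Fin m) (Fin m) R where
  toFun f := Matrix.of fun i j => if (j : ℕ) ≤ i then coeff ((i : ℕ) - j) f else 0
  map_one' := by
    ext i j
    simp only [coeff_one, Matrix.of_apply, Matrix.one_apply, Fin.ext_iff]
    split_ifs <;> first | rfl | omega
  map_zero' := by ext; simp
  map_add' f g := by ext; simp only [map_add, Matrix.of_apply, Matrix.add_apply]; split_ifs <;> simp
  map_mul' f g := by
    ext i j
    simp only [Matrix.mul_apply, Matrix.of_apply, ite_mul, mul_ite, zero_mul, mul_zero]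
    rw [Fin.sum_univ_eq_sum_range (fun k => if (j : ℕ) ≤ k then if k ≤ (i : ℕ) then
      coeff ((i : ℕ) - k) f * coeff (k - j) g else 0 else 0)]
    split_ifs with hji
    · rw [coeff_mul,
        Finset.Nat.sum_antidiagonal_sub_eq_sum_Icc (fun p q => coeff p f * coeff q g) hji,
        ← Finset.sum_filter, ← Finset.sum_filter, Finset.filter_filter]
      congr 1
      ext k
      simp only [Finset.mem_filter, Finset.mem_range, Finset.mem_Icc]
      omega
    · refine (Finset.sum_eq_zero fun k _ => ?_).symm
      split_ifs <;> first | rfl | omega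

theorem lowerToeplitz_apply (f : R⟦X⟧) (i j : Fin m) :
    lowerToeplitz m f i j = if (j : ℕ) ≤ i then coeff ((i : ℕ) - j) f else 0 :=
  rfl

variable {m}

theorem lowerToeplitz_X_mul_apply_zero (f : R⟦X⟧) (j : Fin (m + 1)) :
    lowerToeplitz (m + 1) (X * f) 0 j = 0 := by
  simp [lowerToeplitz_apply]

theorem lowerToeplitz_X_mul_apply_succ_castSucc (f : R⟦X⟧) (k i : Fin m) :
    lowerToeplitz (m + 1) (X * f) k.succ i.castSucc = lowerToeplitz m f k i := by
  simp only [lowerToeplitz_apply, Fin.val_succ, Fin.val_castSucc]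
  split_ifs with h₁ h₂ h₂
  · rw [Nat.succ_sub h₂, coeff_succ_X_mul]
  · rw [show (k : ℕ) + 1 - i = 0 by omega, coeff_zero_X_mul]
  · omega
  · rfl

theorem lowerToeplitz_X_mul_apply_succ_last (f : R⟦X⟧) (k : Fin m) :
    lowerToeplitz (m + 1) (X * f) k.succ (Fin.last m) = 0 := by
  simp only [lowerToeplitz_apply, Fin.val_succ, Fin.val_last]
  split_ifs with h
  · rw [show (k : ℕ) + 1 - m = 0 by omega, coeff_zero_X_mul]
  · rfl

end LowerToeplitz

theorem splitAt_eq_finSumFinEquiv_symm {p q : ℕ} (h : p + q = p + q) :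
    splitAt h = finSumFinEquiv.symm := by
  ext i : 1
  refine Fin.addCases (fun i => ?_) (fun i => ?_) i <;> simp [splitAt]

theorem one_sub_conjTranspose_mul_self_lowerToeplitz_X_mul {m : ℕ} (h : m + 1 = m + 1)
    (f : ℂ⟦X⟧) :
    1 - (lowerToeplitz (m + 1) (X * f))ᴴ * lowerToeplitz (m + 1) (X * f) =
      dblock h (1 - (lowerToeplitz m f)ᴴ * lowerToeplitz m f) 1 := by
  ext i j
  induction i using Fin.lastCases <;> induction j using Fin.lastCases <;>
    simp only [dblock, Matrix.submatrix_apply, splitAt_eq_finSumFinEquiv_symm,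
      finSumFinEquiv_symm_apply_castSucc, finSumFinEquiv_symm_last, Matrix.fromBlocks_apply₁₁,
      Matrix.fromBlocks_apply₁₂, Matrix.fromBlocks_apply₂₁, Matrix.fromBlocks_apply₂₂,
      Matrix.sub_apply, Matrix.mul_apply, Fin.sum_univ_succ, Matrix.conjTranspose_apply,
      lowerToeplitz_X_mul_apply_zero, lowerToeplitz_X_mul_apply_succ_castSucc,
      lowerToeplitz_X_mul_apply_succ_last, star_zero, zero_mul, mul_zero, zero_add,
      Finset.sum_const_zero] <;>
    simp [Matrix.one_apply, (Fin.castSucc_ne_last _).symm]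

theorem one_sub_X_mul_mk_mul_mk_eq_one {R : Type*} [CommRing R] {a c : ℕ → R} (hc0 : c 0 = 1)
    (hc : ∀ k : ℕ, c (k + 1) = ∑ j ∈ Finset.range (k + 1), c j * a (k - j)) :
    (1 - X * mk a) * mk c = 1 := by
  ext (_ | k)
  · simp [hc0]
  · rw [sub_mul, one_mul, map_sub, mul_assoc, mul_comm (mk a), coeff_succ_X_mul, coeff_mul,
      Finset.Nat.sum_antidiagonal_eq_sum_range_succ_mk, coeff_mk, hc, coeff_one]
    simp

theorem Btil_eq_lowerToeplitz (c : ℕ → ℂ) (m : ℕ) :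
    Btil c m = lowerToeplitz m (map (starRingEnd ℂ) (mk c)) := by
  ext i j
  simp [Btil, lowerToeplitz_apply]

theorem Ttil_eq_lowerToeplitz (a : ℕ → ℂ) (r : ℕ) :
    Ttil a r = lowerToeplitz r (map (starRingEnd ℂ) (mk a)) := by
  ext i j
  simp [Ttil, lowerToeplitz_apply]

theorem Mmat_map_conj {c : ℕ → ℂ} (hc0 : c 0 = 1) (m : ℕ) :
    (Mmat c m).map (starRingEnd ℂ) = Btil c m + (Btil c m)ᴴ - 1 := by
  ext i j
  simp only [Mmat, Btil, Matrix.map_apply, Matrix.of_apply, Matrix.sub_apply, Matrix.add_apply,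
    Matrix.conjTranspose_apply, Matrix.one_apply, Fin.ext_iff]
  split_ifs <;> first | omega | simp_all

theorem star_mul_one_sub_star_mul_self_mul {R : Type*} [Ring R] [StarRing R] {b n : R}
    (h : (1 - n) * b = 1) : star b * (1 - star n * n) * b = b + star b - 1 := by
  have hnb : n * b = b - 1 := by rw [sub_mul, one_mul] at h; rw [← h]; abel
  have hbn : star b * star n = star b - 1 := by rw [← star_mul, hnb, star_sub, star_one]
  calc star b * (1 - star n * n) * b = star b * b - (star b * star n) * (n * b) := by noncomm_ring
    _ = b + star b - 1 := by rw [hnb, hbn]; noncomm_ring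

/-- `conj(M_r) = B̃_r* diag(I_r - T̃_r* T̃_r, 1) B̃_r`. -/
theorem conj_Mmat_eq_Btil_dblock_mul
    (a c : ℕ → ℂ) (hc0 : c 0 = 1)
    (hc : ∀ k : ℕ, c (k + 1) = ∑ j ∈ Finset.range (k + 1), c j * a (k - j))
    (r : ℕ) :
    (Mmat c (r + 1)).map (starRingEnd ℂ) =
      (Btil c (r + 1))ᴴ *
        dblock (by omega) (1 - (Ttil a r)ᴴ * Ttil a r)
          (1 : Matrix (Fin 1) (Fin 1) ℂ) *
        Btil c (r + 1) := by
  set ā := map (starRingEnd ℂ) (mk a)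
  have hseries : (1 - X * ā) * map (starRingEnd ℂ) (mk c) = 1 := by
    simpa [ā] using congrArg (map (starRingEnd ℂ)) (one_sub_X_mul_mk_mul_mk_eq_one hc0 hc)
  have hinv : (1 - lowerToeplitz (r + 1) (X * ā)) * Btil c (r + 1) = 1 := by
    rw [Btil_eq_lowerToeplitz, ← map_one (lowerToeplitz (r + 1)), ← map_sub, ← map_mul,
      hseries, map_one]
  rw [Ttil_eq_lowerToeplitz, ← one_sub_conjTranspose_mul_self_lowerToeplitz_X_mul,
    Mmat_map_conj hc0, ← Matrix.star_eq_conjTranspose, ← Matrix.star_eq_conjTranspose,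
    star_mul_one_sub_star_mul_self_mul hinv]
end

section
/- Let a₀, a₁, a₂, … be complex numbers. For r ≥ 1 let G_r be the 2r×2r Hermitian block matrix [[I_r − T_r T_r*, Q_r], [Q_r*, I_r − T̃_r T̃_r*]]. Then each of the four quantities ν(I_r − T_r T_r*), π(I_r − T_r T_r*), ν(G_r), and π(G_r) is a nondecreasing function of r; that is, for all 1 ≤ r ≤ s: ν(I_r − T_r T_r*) ≤ ν(I_s − T_s T_s*), π(I_r − T_r T_r*) ≤ π(I_s − T_s T_s*), ν(G_r) ≤ ν(G_s), and π(G_r) ≤ π(G_s). -/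
open scoped Matrix ComplexConjugate

/-- The `2r×2r` Hermitian block matrix
`G_r = [[I_r − T_r T_r*, Q_r], [Q_r*, I_r − T̃_r T̃_r*]]`. -/
noncomputable def Gblk (a : ℕ → ℂ) (r : ℕ) :
    Matrix (Fin r ⊕ Fin r) (Fin r ⊕ Fin r) ℂ :=
  Matrix.fromBlocks (1 - Tmat a r * (Tmat a r)ᴴ) (Qmat a r)
    ((Qmat a r)ᴴ) (1 - Ttil a r * (Ttil a r)ᴴ)

/-
Both `I_r − T_r T_r*` and `G_r` are principal submatrices of their size-`s` counterparts: `T_s` is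
lower triangular, so the leading `r×r` block of `T_s T_s*` is `T_r T_r*`, and `Q_r` is the leading
block of `Q_s`. Inertia indices cannot grow from `A` to `P* A P`, in particular to a principal
submatrix. The eigenvectors of `P* A P` with negative eigenvalues span a space `W` of dimension
`ν(P* A P)` on which its form is negative definite; `P` maps `W` injectively onto a space on which
the form of `A` is negative definite, and such a space meets the span of the eigenvectors of `A`
with nonnegative eigenvalues only in `0`, so its dimension is at most `ν(A)`. Likewise for `π`.
-/

open Matrix

namespace Matrix

variable {n m : Type*} [Fintype n] [DecidableEq n]

lemma submatrix_eq_conjTranspose_mul_mul {α : Type*} [Semiring α] [StarRing α]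
    (A : Matrix n n α) (f : m → n) :
    A.submatrix f f =
      ((1 : Matrix n n α).submatrix id f)ᴴ * A * (1 : Matrix n n α).submatrix id f := by
  ext i j
  simp [mul_apply, one_apply]

variable [Fintype m] [DecidableEq m]

lemma IsHermitian.re_star_dotProduct_mulVec {A : Matrix n n ℂ} (hA : A.IsHermitian)
    (x : n → ℂ) :
    (star x ⬝ᵥ A *ᵥ x).re = ∑ i, hA.eigenvalues i *
      Complex.normSq ((star (hA.eigenvectorUnitary : Matrix n n ℂ) *ᵥ x) i) := by
  set U := (hA.eigenvectorUnitary : Matrix n n ℂ)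
  set y := star U *ᵥ x
  have hdiag :
      star x ⬝ᵥ A *ᵥ x = star y ⬝ᵥ diagonal (Complex.ofReal ∘ hA.eigenvalues) *ᵥ y := by
    conv_lhs => rw [hA.spectral_theorem, Unitary.conjStarAlgAut_apply]
    rw [← mulVec_mulVec, ← mulVec_mulVec, dotProduct_mulVec, star_mulVec]
    simp only [y, star_eq_conjTranspose, conjTranspose_conjTranspose]
    rfl
  rw [hdiag, dotProduct, Complex.re_sum]
  refine Finset.sum_congr rfl fun i _ => ?_
  rw [mulVec_diagonal, Pi.star_apply, Function.comp_apply, mul_left_comm, Complex.star_def,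
    ← Complex.normSq_eq_conj_mul_self, ← Complex.ofReal_mul, Complex.ofReal_re]

-- The sign `ε = -1` (resp. `ε = 1`) selects the negative (resp. positive) eigenvalues.
lemma IsHermitian.finrank_le_card_eigenvalues {V : Type*} [AddCommGroup V] [Module ℂ V]
    {A : Matrix n n ℂ} (hA : A.IsHermitian) (ε : ℝ) (φ : V →ₗ[ℂ] n → ℂ)
    (hφ : ∀ v ≠ 0, 0 < ε * (star (φ v) ⬝ᵥ A *ᵥ φ v).re) :
    Module.finrank ℂ V ≤ Fintype.card {i // 0 < ε * hA.eigenvalues i} := by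
  let ψ := LinearMap.funLeft ℂ ℂ (Subtype.val : {i // 0 < ε * hA.eigenvalues i} → n) ∘ₗ
    (star (hA.eigenvectorUnitary : Matrix n n ℂ)).mulVecLin ∘ₗ φ
  -- a vector killed by `ψ` only sees the eigenvalues with `ε λ ≤ 0`
  have hψ : Function.Injective ψ := by
    rw [← LinearMap.ker_eq_bot, LinearMap.ker_eq_bot']
    intro v hv
    by_contra hne
    have hpos := hφ v hne
    rw [hA.re_star_dotProduct_mulVec, Finset.mul_sum] at hpos
    refine hpos.not_ge (Finset.sum_nonpos fun i _ => ?_)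
    rw [← mul_assoc]
    by_cases hi : 0 < ε * hA.eigenvalues i
    · have hvi : (star (hA.eigenvectorUnitary : Matrix n n ℂ) *ᵥ φ v) i = 0 :=
        congrFun hv ⟨i, hi⟩
      simp [hvi]
    · exact mul_nonpos_of_nonpos_of_nonneg (not_lt.mp hi) (Complex.normSq_nonneg _)
  simpa using LinearMap.finrank_le_finrank_of_injective hψ

lemma IsHermitian.exists_linearMap_card_eigenvalues {A : Matrix n n ℂ} (hA : A.IsHermitian)
    (ε : ℝ) : ∃ φ : ({i // 0 < ε * hA.eigenvalues i} → ℂ) →ₗ[ℂ] n → ℂ,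
      ∀ c ≠ 0, 0 < ε * (star (φ c) ⬝ᵥ A *ᵥ φ c).re := by
  set U := (hA.eigenvectorUnitary : Matrix n n ℂ)
  refine ⟨U.mulVecLin ∘ₗ Function.ExtendByZero.linearMap ℂ Subtype.val, fun c hc => ?_⟩
  obtain ⟨i₀, hi₀⟩ := Function.ne_iff.mp hc
  have hUU : star U * U = 1 := Unitary.coe_star_mul_self hA.eigenvectorUnitary
  simp only [LinearMap.coe_comp, Function.comp_apply, mulVecLin_apply]
  rw [hA.re_star_dotProduct_mulVec, mulVec_mulVec, hUU, one_mulVec, Finset.mul_sum]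
  simp only [Function.ExtendByZero.linearMap_apply]
  refine Finset.sum_pos' (fun j _ => ?_) ⟨i₀, Finset.mem_univ _, ?_⟩
  · rw [← mul_assoc]
    by_cases hj : 0 < ε * hA.eigenvalues j
    · exact mul_nonneg hj.le (Complex.normSq_nonneg _)
    · rw [Function.extend_apply' (f := Subtype.val) c 0 j (by rintro ⟨k, rfl⟩; exact hj k.2)]
      simp
  · rw [← mul_assoc, Subtype.val_injective.extend_apply]
    exact mul_pos i₀.2 (Complex.normSq_pos.mpr hi₀)

lemma IsHermitian.card_eigenvalues_conjTranspose_mul_mul_le {A : Matrix n n ℂ}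
    (hA : A.IsHermitian) (P : Matrix n m ℂ) (ε : ℝ) :
    Fintype.card {i // 0 < ε * (isHermitian_conjTranspose_mul_mul P hA).eigenvalues i} ≤
      Fintype.card {i // 0 < ε * hA.eigenvalues i} := by
  obtain ⟨φ, hφ⟩ :=
    (isHermitian_conjTranspose_mul_mul P hA).exists_linearMap_card_eigenvalues ε
  refine (Module.finrank_fintype_fun_eq_card ℂ).symm.le.trans
    (hA.finrank_le_card_eigenvalues ε (P.mulVecLin ∘ₗ φ) fun c hc => ?_)
  have hform :
      star (φ c) ⬝ᵥ (Pᴴ * A * P) *ᵥ φ c = star (P *ᵥ φ c) ⬝ᵥ A *ᵥ (P *ᵥ φ c) := by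
    rw [← mulVec_mulVec, ← mulVec_mulVec, dotProduct_mulVec, star_mulVec]
  simpa [hform] using hφ c hc

lemma negEig_conjTranspose_mul_mul_le {A : Matrix n n ℂ} (hA : A.IsHermitian)
    (P : Matrix n m ℂ) : negEig (Pᴴ * A * P) ≤ negEig A := by
  have h := hA.card_eigenvalues_conjTranspose_mul_mul_le P (-1)
  simp only [neg_one_mul, neg_pos] at h
  simpa [negEig, hA, isHermitian_conjTranspose_mul_mul P hA, Nat.card_eq_fintype_card] using h

lemma posEig_conjTranspose_mul_mul_le {A : Matrix n n ℂ} (hA : A.IsHermitian)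
    (P : Matrix n m ℂ) : posEig (Pᴴ * A * P) ≤ posEig A := by
  have h := hA.card_eigenvalues_conjTranspose_mul_mul_le P 1
  simp only [one_mul] at h
  simpa [posEig, hA, isHermitian_conjTranspose_mul_mul P hA, Nat.card_eq_fintype_card] using h

lemma negEig_submatrix_le {A : Matrix n n ℂ} (hA : A.IsHermitian) (f : m → n) :
    negEig (A.submatrix f f) ≤ negEig A := by
  rw [submatrix_eq_conjTranspose_mul_mul]
  exact negEig_conjTranspose_mul_mul_le hA _

lemma posEig_submatrix_le {A : Matrix n n ℂ} (hA : A.IsHermitian) (f : m → n) :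
    posEig (A.submatrix f f) ≤ posEig A := by
  rw [submatrix_eq_conjTranspose_mul_mul]
  exact posEig_conjTranspose_mul_mul_le hA _

end Matrix

lemma Matrix.BlockTriangular.submatrix_castLE_mul_conjTranspose {α : Type*}
    [NonUnitalNonAssocSemiring α] [StarRing α] {r s : ℕ} (h : r ≤ s)
    {M : Matrix (Fin s) (Fin s) α} (hM : M.BlockTriangular OrderDual.toDual) :
    (M * Mᴴ).submatrix (Fin.castLE h) (Fin.castLE h) =
      M.submatrix (Fin.castLE h) (Fin.castLE h) *
        (M.submatrix (Fin.castLE h) (Fin.castLE h))ᴴ := by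
  ext i j
  simp only [submatrix_apply, mul_apply, conjTranspose_apply]
  refine (Fintype.sum_of_injective _ (Fin.castLE_injective h) _ _ (fun k hk => ?_)
    fun _ => rfl).symm
  have hik : Fin.castLE h i < k := by
    rw [Fin.range_castLE, Set.mem_ofPred_eq, not_lt] at hk
    exact Fin.lt_def.mpr (i.isLt.trans_le hk)
  rw [hM (OrderDual.toDual_lt_toDual.mpr hik), zero_mul]

lemma Tmat_blockTriangular (a : ℕ → ℂ) (s : ℕ) :
    (Tmat a s).BlockTriangular OrderDual.toDual :=
  fun _ _ hij => if_neg (not_le.mpr hij)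

lemma Tmat_submatrix_castLE (a : ℕ → ℂ) {r s : ℕ} (h : r ≤ s) :
    (Tmat a s).submatrix (Fin.castLE h) (Fin.castLE h) = Tmat a r :=
  rfl

lemma Ttil_eq_Tmat (a : ℕ → ℂ) (r : ℕ) : Ttil a r = Tmat (conj ∘ a) r := rfl

lemma one_sub_Tmat_mul_conjTranspose_eq_submatrix (a : ℕ → ℂ) {r s : ℕ} (h : r ≤ s) :
    1 - Tmat a r * (Tmat a r)ᴴ =
      (1 - Tmat a s * (Tmat a s)ᴴ).submatrix (Fin.castLE h) (Fin.castLE h) := by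
  rw [submatrix_sub, Pi.sub_apply, Pi.sub_apply, submatrix_one _ (Fin.castLE_injective h),
    (Tmat_blockTriangular a s).submatrix_castLE_mul_conjTranspose h, Tmat_submatrix_castLE]

lemma Gblk_eq_submatrix (a : ℕ → ℂ) {r s : ℕ} (h : r ≤ s) :
    Gblk a r = (Gblk a s).submatrix (Sum.map (Fin.castLE h) (Fin.castLE h))
      (Sum.map (Fin.castLE h) (Fin.castLE h)) := by
  rw [Gblk, Gblk, Ttil_eq_Tmat, Ttil_eq_Tmat, one_sub_Tmat_mul_conjTranspose_eq_submatrix a h,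
    one_sub_Tmat_mul_conjTranspose_eq_submatrix _ h]
  ext (_ | _) (_ | _) <;> rfl

lemma isHermitian_Gblk (a : ℕ → ℂ) (r : ℕ) : (Gblk a r).IsHermitian :=
  .fromBlocks (isHermitian_one.sub (isHermitian_mul_conjTranspose_self _)) rfl
    (isHermitian_one.sub (isHermitian_mul_conjTranspose_self _))

theorem negEig_posEig_monotone_general
    (a : ℕ → ℂ) (r s : ℕ) (hrs : r ≤ s) :
    negEig (1 - Tmat a r * (Tmat a r)ᴴ) ≤ negEig (1 - Tmat a s * (Tmat a s)ᴴ) ∧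
    posEig (1 - Tmat a r * (Tmat a r)ᴴ) ≤ posEig (1 - Tmat a s * (Tmat a s)ᴴ) ∧
    negEig (Gblk a r) ≤ negEig (Gblk a s) ∧
    posEig (Gblk a r) ≤ posEig (Gblk a s) := by
  have hT : (1 - Tmat a s * (Tmat a s)ᴴ).IsHermitian :=
    isHermitian_one.sub (isHermitian_mul_conjTranspose_self _)
  have hG := isHermitian_Gblk a s
  rw [one_sub_Tmat_mul_conjTranspose_eq_submatrix a hrs, Gblk_eq_submatrix a hrs]
  exact ⟨negEig_submatrix_le hT _, posEig_submatrix_le hT _, negEig_submatrix_le hG _,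
    posEig_submatrix_le hG _⟩

/-- the quantities `ν(I_r − T_r T_r*)`, `π(I_r − T_r T_r*)`,
`ν(G_r)` and `π(G_r)` are nondecreasing functions of `r`. -/
theorem negEig_posEig_monotone
    (a : ℕ → ℂ) (r s : ℕ) (hr : 1 ≤ r) (hrs : r ≤ s) :
    negEig (1 - Tmat a r * (Tmat a r)ᴴ) ≤ negEig (1 - Tmat a s * (Tmat a s)ᴴ) ∧
    posEig (1 - Tmat a r * (Tmat a r)ᴴ) ≤ posEig (1 - Tmat a s * (Tmat a s)ᴴ) ∧
    negEig (Gblk a r) ≤ negEig (Gblk a s) ∧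
    posEig (Gblk a r) ≤ posEig (Gblk a s) :=
  negEig_posEig_monotone_general a r s hrs
end
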